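/- Let T ∈ G be elliptic and let λ be an eigenvalue of T such that M = ker(T − λ·I) contains a time-like vector. Then H ⊕ ℂ = M ⊕ M^† (internal direct sum), A is positive definite on M^† and M^† is complete for the induced norm, T maps M^† bijectively onto itself, and for every S ∈ G one has S ∘ T = T ∘ S if and only if S(M) = M, S(M^†) = M^†, and S ∘ T = T ∘ S on M^†. Consequently the map S ↦ (S|_M, S|_{M^†}) is a group isomorphism from the centralizer {S ∈ G : ST = TS} onto G_M × Z(T|_{M^†}), where G_M is the group of bounded bijective linear self-maps of M preserving A|_M, and Z(T|_{M^†}) consists of unitary operators of the Hilbert space (M^†, A) commuting with T|_{M^†}. -/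

import Mathlib

noncomputable section

variable {H : Type*} [NormedAddCommGroup H] [InnerProductSpace ℂ H] [CompleteSpace H]

/-- The Hermitian form `A((x,z),(y,w)) = ⟨x,y⟩ - z·conj w` on `H ⊕ ℂ`, linear in the
first argument (the paper's convention); `⟨x,y⟩` (linear in `x`) is `inner y x` in Mathlib. -/
def formA (u v : H × ℂ) : ℂ :=
  (inner ℂ v.1 u.1 : ℂ) - u.2 * (starRingEnd ℂ) v.2

/-- The standard inner product of the Hilbert space `H ⊕ ℂ`, linear in the first argument. -/
def ipStd (u v : H × ℂ) : ℂ :=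
  (inner ℂ v.1 u.1 : ℂ) + u.2 * (starRingEnd ℂ) v.2

/-- Membership in the group `G` of bounded bijective linear maps preserving `A`. -/
def memG (T : (H × ℂ) →L[ℂ] (H × ℂ)) : Prop :=
  Function.Bijective T ∧ ∀ u v : H × ℂ, formA (T u) (T v) = formA u v

/-- `T` is elliptic: it has an eigenvector `(x,1)` with `‖x‖ < 1`. -/
def IsEllipticG (T : (H × ℂ) →L[ℂ] (H × ℂ)) : Prop :=
  ∃ x : H, ‖x‖ < 1 ∧ ∃ μ : ℂ, T (x, 1) = μ • ((x, 1) : H × ℂ)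

/-- Points `x` of the closed unit ball with `(x,1)` an eigenvector of `T`. -/
def fixedBall (T : (H × ℂ) →L[ℂ] (H × ℂ)) : Set H :=
  {x : H | ‖x‖ ≤ 1 ∧ ∃ μ : ℂ, T (x, 1) = μ • ((x, 1) : H × ℂ)}

/-- `T` is hyperbolic: not elliptic, with exactly two fixed points in the closed ball. -/
def IsHyperbolicG (T : (H × ℂ) →L[ℂ] (H × ℂ)) : Prop :=
  ¬ IsEllipticG T ∧ ∃ x y : H, x ≠ y ∧ fixedBall T = {x, y}

/-- `T` is parabolic: not elliptic, with exactly one fixed point in the closed ball. -/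
def IsParabolicG (T : (H × ℂ) →L[ℂ] (H × ℂ)) : Prop :=
  ¬ IsEllipticG T ∧ ∃ x : H, fixedBall T = {x}

/-- `M†`, the `A`-orthogonal complement of a subspace `M` of `H ⊕ ℂ`. -/
def daggerA (M : Submodule ℂ (H × ℂ)) : Submodule ℂ (H × ℂ) where
  carrier := {v | ∀ m ∈ M, formA v m = 0}
  add_mem' := by
    intro a b ha hb m hm
    have h1 := ha m hm
    have h2 := hb m hm
    simp only [formA, Prod.fst_add, Prod.snd_add, inner_add_right, add_mul] at *
    linear_combination h1 + h2
  zero_mem' := by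
    intro m hm
    simp [formA]
  smul_mem' := by
    intro c a ha m hm
    have h1 := ha m hm
    simp only [formA, Prod.smul_fst, Prod.smul_snd, inner_smul_right, smul_eq_mul] at *
    linear_combination c * h1

/-- The norm induced by `A` on a subspace where `A` is positive. -/
def nA (v : H × ℂ) : ℝ := Real.sqrt (formA v v).re

/-- Sequential completeness of a subspace for the norm induced by `A`. -/
def CompleteForA (M : Submodule ℂ (H × ℂ)) : Prop :=
  ∀ f : ℕ → H × ℂ, (∀ n, f n ∈ M) →
    (∀ ε : ℝ, 0 < ε → ∃ N : ℕ, ∀ m n : ℕ, N ≤ m → N ≤ n → nA (f m - f n) < ε) →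
    ∃ v ∈ M, ∀ ε : ℝ, 0 < ε → ∃ N : ℕ, ∀ n : ℕ, N ≤ n → nA (f n - v) < ε

end

/-!
Rescaling a time-like vector of `M` gives `e = (x, 1) ∈ M` with `‖x‖ < 1`. The `A`-orthogonal
complement of `e` is the graph of `y ↦ ⟪x, y⟫`, and there `A` becomes `⟪·, B ·⟫` with
`B = 1 - x ⊗ x ≥ 1 - ‖x‖²`: an inner product equivalent to the Hilbert one. Hence `A` is positive
definite on `M† ⊆ e†`, and the closed subspace `M ∩ e†` has an `A`-orthogonal complement in `e†`
by a Lax–Milgram argument, which yields `H ⊕ ℂ = M ⊕ M†`.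

An element of `G` commuting with `T` preserves the eigenspace `M`, hence also its `A`-orthogonal
`M†`; conversely, a map preserving `M` commutes there with `T`, which is scalar on `M`. The
centralizer is then glued from pairs of restrictions along the topological direct sum `M ⊕ M†`.
-/

open scoped InnerProductSpace ComplexConjugate

section Coercive
variable {𝕜 E : Type*} [RCLike 𝕜] [NormedAddCommGroup E] [InnerProductSpace 𝕜 E]

open RCLike

theorem mul_norm_le_norm_apply_of_coercive (S : E →L[𝕜] E) {c : ℝ}
    (hS : ∀ v, c * ‖v‖ ^ 2 ≤ re ⟪v, S v⟫_𝕜) (v : E) : c * ‖v‖ ≤ ‖S v‖ := by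
  rcases (norm_nonneg v).eq_or_lt with hv | hv
  · simp [← hv]
  refine le_of_mul_le_mul_right ?_ hv
  calc c * ‖v‖ * ‖v‖ = c * ‖v‖ ^ 2 := by ring
    _ ≤ re ⟪v, S v⟫_𝕜 := hS v
    _ ≤ ‖v‖ * ‖S v‖ := re_inner_le_norm v (S v)
    _ = ‖S v‖ * ‖v‖ := mul_comm _ _

theorem surjective_of_coercive [CompleteSpace E] (S : E →L[𝕜] E) {c : ℝ} (hc : 0 < c)
    (hS : ∀ v, c * ‖v‖ ^ 2 ≤ re ⟪v, S v⟫_𝕜) : Function.Surjective S := by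
  have hanti : AntilipschitzWith (Real.toNNReal c⁻¹) S := by
    refine S.antilipschitz_of_bound fun v => ?_
    rw [Real.coe_toNNReal _ (inv_nonneg.2 hc.le), inv_mul_eq_div, le_div_iff₀' hc]
    exact mul_norm_le_norm_apply_of_coercive S hS v
  have hclosed : IsClosed (LinearMap.range (S : E →ₗ[𝕜] E) : Set E) := by
    rw [LinearMap.coe_range]
    exact hanti.isClosed_range S.uniformContinuous
  have := hclosed.completeSpace_coe
  refine LinearMap.range_eq_top.1 ?_
  rw [← Submodule.orthogonal_eq_bot_iff, Submodule.eq_bot_iff]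
  intro g hg
  have hSg : ⟪g, S g⟫_𝕜 = 0 := by
    rw [← inner_conj_symm, (Submodule.mem_orthogonal _ g).1 hg (S g) ⟨g, rfl⟩, map_zero]
  have := hS g
  rw [hSg, map_zero] at this
  exact norm_eq_zero.1 (pow_eq_zero_iff two_ne_zero |>.1 (by nlinarith [sq_nonneg ‖g‖]))

/-- The compression of `B` to `F` is again coercive, hence onto. -/
theorem Submodule.exists_sub_mem_orthogonal_of_coercive (F : Submodule 𝕜 E) [CompleteSpace F]
    (B : E →L[𝕜] E) {c : ℝ} (hc : 0 < c) (hB : ∀ v, c * ‖v‖ ^ 2 ≤ re ⟪v, B v⟫_𝕜) (y : E) :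
    ∃ f ∈ F, B (y - f) ∈ Fᗮ := by
  set S : F →L[𝕜] F := F.orthogonalProjectionOnto ∘L B ∘L F.subtypeL
  have hS : ∀ g : F, ⟪g, S g⟫_𝕜 = ⟪(g : E), B g⟫_𝕜 := fun g =>
    F.inner_orthogonalProjectionOnto_eq_of_mem_left g (B g)
  obtain ⟨f, hf⟩ := surjective_of_coercive S hc (fun g => by rw [hS]; exact hB g)
    (F.orthogonalProjectionOnto (B y))
  refine ⟨f, f.2, ?_⟩
  rw [← Submodule.orthogonalProjectionOnto_eq_zero_iff, map_sub, map_sub, ← hf]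
  exact sub_self _

end Coercive

section LinearMaps
variable {R E : Type*} [CommRing R] [AddCommGroup E] [Module R E]

lemma mem_ker_sub_smul_id_iff {f : E →ₗ[R] E} {lam : R} {v : E} :
    v ∈ LinearMap.ker (f - lam • LinearMap.id) ↔ f v = lam • v := by
  simp [sub_eq_zero]

lemma image_ker_sub_smul_id_eq {S T : E →ₗ[R] E} (hS : Function.Bijective S)
    (hST : ∀ v, S (T v) = T (S v)) (lam : R) :
    S '' LinearMap.ker (T - lam • LinearMap.id) = LinearMap.ker (T - lam • LinearMap.id) := by
  ext v
  simp only [Set.mem_image, SetLike.mem_coe, mem_ker_sub_smul_id_iff]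
  constructor
  · rintro ⟨w, hw, rfl⟩
    rw [← hST, hw, map_smul]
  · intro hv
    obtain ⟨w, rfl⟩ := hS.2 v
    refine ⟨w, hS.1 ?_, rfl⟩
    rw [hST, hv, map_smul]

lemma ContinuousLinearMap.comp_eq_comp_of_mapsTo [TopologicalSpace E] {S T : E →L[R] E}
    {lam : R} {M N : Submodule R E} (hM : M = LinearMap.ker ((T : E →ₗ[R] E) - lam • LinearMap.id))
    (hMN : Codisjoint M N) (hSM : Set.MapsTo S M M) (hSN : ∀ v ∈ N, S (T v) = T (S v)) :
    S ∘L T = T ∘L S := by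
  refine LinearMap.ext_on_codisjoint hMN (fun m hm => ?_) hSN
  have hTm : T m = lam • m := mem_ker_sub_smul_id_iff.1 (hM ▸ hm)
  have hTSm : T (S m) = lam • S m := mem_ker_sub_smul_id_iff.1 (hM ▸ hSM hm)
  simp only [ContinuousLinearMap.comp_apply, hTm, hTSm, map_smul]

lemma Submodule.bijective_ofIsCompl {p q : Submodule R E} (h : IsCompl p q) {φ : p →ₗ[R] p}
    {ψ : q →ₗ[R] q} (hφ : Function.Bijective φ) (hψ : Function.Bijective ψ) :
    Function.Bijective (LinearMap.ofIsCompl h (p.subtype ∘ₗ φ) (q.subtype ∘ₗ ψ)) := by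
  have : ⇑(LinearMap.ofIsCompl h (p.subtype ∘ₗ φ) (q.subtype ∘ₗ ψ)) =
      p.prodEquivOfIsCompl q h ∘ Prod.map φ ψ ∘ (p.prodEquivOfIsCompl q h).symm := rfl
  rw [this]
  exact (LinearEquiv.bijective _).comp ((hφ.prodMap hψ).comp (LinearEquiv.bijective _))

end LinearMaps

section FormA
variable {H : Type*} [NormedAddCommGroup H] [InnerProductSpace ℂ H]

lemma formA_add_left (u u' v : H × ℂ) : formA (u + u') v = formA u v + formA u' v := by
  simp only [formA, Prod.fst_add, Prod.snd_add, inner_add_right, add_mul]; ring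

lemma formA_add_right (u v v' : H × ℂ) : formA u (v + v') = formA u v + formA u v' := by
  simp only [formA, Prod.fst_add, Prod.snd_add, inner_add_left, map_add, mul_add]; ring

lemma formA_sub_left (u u' v : H × ℂ) : formA (u - u') v = formA u v - formA u' v := by
  simp only [formA, Prod.fst_sub, Prod.snd_sub, inner_sub_right, sub_mul]; ring

lemma formA_smul_left (c : ℂ) (u v : H × ℂ) : formA (c • u) v = c * formA u v := by
  simp only [formA, Prod.smul_fst, Prod.smul_snd, inner_smul_right, smul_eq_mul]; ring

lemma formA_smul_right (c : ℂ) (u v : H × ℂ) : formA u (c • v) = conj c * formA u v := by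
  simp only [formA, Prod.smul_fst, Prod.smul_snd, inner_smul_left, smul_eq_mul, map_mul]; ring

lemma conj_formA (u v : H × ℂ) : conj (formA u v) = formA v u := by
  simp only [formA, map_sub, map_mul, Complex.conj_conj, inner_conj_symm]; ring

lemma formA_self (w : H × ℂ) : formA w w = ((‖w.1‖ ^ 2 - ‖w.2‖ ^ 2 : ℝ) : ℂ) := by
  simp [formA, inner_self_eq_norm_sq_to_K, Complex.mul_conj']

lemma formA_mk_one (x : H) (w : H × ℂ) : formA w (x, 1) = ⟪x, w.1⟫_ℂ - w.2 := by
  simp [formA]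

lemma continuous_formA_left (m : H × ℂ) : Continuous fun v : H × ℂ => formA v m :=
  (continuous_const.inner continuous_fst).sub (continuous_snd.mul continuous_const)

lemma nA_le_norm (u : H × ℂ) : nA u ≤ ‖u‖ := by
  have h : (formA u u).re ≤ ‖u‖ ^ 2 := by
    rw [formA_self, Complex.ofReal_re]
    nlinarith [norm_fst_le u, norm_nonneg u.1, norm_nonneg u.2]
  exact (Real.sqrt_le_sqrt h).trans_eq (Real.sqrt_sq (norm_nonneg u))

lemma exists_smul_eq_mk_one_of_re_formA_neg {v : H × ℂ} (hv : (formA v v).re < 0) :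
    ∃ c : ℂ, ∃ x : H, ‖x‖ < 1 ∧ c • v = (x, 1) := by
  have hlt : ‖v.1‖ < ‖v.2‖ := by
    rw [formA_self, Complex.ofReal_re] at hv
    nlinarith [norm_nonneg v.1, norm_nonneg v.2]
  have h2 : v.2 ≠ 0 := norm_pos_iff.1 ((norm_nonneg _).trans_lt hlt)
  refine ⟨v.2⁻¹, v.2⁻¹ • v.1, ?_, Prod.ext rfl (inv_mul_cancel₀ h2)⟩
  rwa [norm_smul, norm_inv, inv_mul_lt_one₀ (norm_pos_iff.2 h2)]

lemma re_formA_self_ge (x : H) {w : H × ℂ} (hw : w.2 = ⟪x, w.1⟫_ℂ) :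
    (1 - ‖x‖ ^ 2) * ‖w.1‖ ^ 2 ≤ (formA w w).re := by
  have h : ‖w.2‖ ≤ ‖x‖ * ‖w.1‖ := hw ▸ norm_inner_le_norm x w.1
  rw [formA_self, Complex.ofReal_re]
  nlinarith [norm_nonneg w.2]

lemma mul_sq_norm_le_re_formA {x : H} (hx : ‖x‖ ≤ 1) {w : H × ℂ} (hw : w.2 = ⟪x, w.1⟫_ℂ) :
    (1 - ‖x‖ ^ 2) * ‖w‖ ^ 2 ≤ (formA w w).re := by
  have h : ‖w.2‖ ≤ ‖w.1‖ := hw ▸ (norm_inner_le_norm x w.1).trans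
    (mul_le_of_le_one_left (norm_nonneg _) hx)
  rw [Prod.norm_def, max_eq_left h]
  exact re_formA_self_ge x hw

end FormA

section Dagger
variable {H : Type*} [NormedAddCommGroup H] [InnerProductSpace ℂ H] {M : Submodule ℂ (H × ℂ)}

lemma formA_eq_zero_of_mem_daggerA {m w : H × ℂ} (hm : m ∈ M) (hw : w ∈ daggerA M) :
    formA m w = 0 := by
  rw [← conj_formA, hw m hm, map_zero]

lemma formA_add_add_of_mem_daggerA {m m' w w' : H × ℂ} (hm : m ∈ M) (hm' : m' ∈ M)
    (hw : w ∈ daggerA M) (hw' : w' ∈ daggerA M) :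
    formA (m + w) (m' + w') = formA m m' + formA w w' := by
  rw [formA_add_left, formA_add_right, formA_add_right, formA_eq_zero_of_mem_daggerA hm hw',
    hw m' hm']
  ring

lemma isClosed_daggerA (M : Submodule ℂ (H × ℂ)) : IsClosed (daggerA M : Set (H × ℂ)) := by
  have h : (daggerA M : Set (H × ℂ)) = ⋂ m ∈ M, {v | formA v m = 0} := by
    ext v
    simp only [Set.mem_iInter₂]
    rfl
  rw [h]
  exact isClosed_biInter fun m _ => isClosed_eq (continuous_formA_left m) continuous_const

lemma snd_eq_inner_of_mem_daggerA {x : H} (hxM : ((x, 1) : H × ℂ) ∈ M) {w : H × ℂ}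
    (hw : w ∈ daggerA M) : w.2 = ⟪x, w.1⟫_ℂ :=
  (sub_eq_zero.1 ((formA_mk_one x w).symm.trans (hw _ hxM))).symm

lemma re_formA_self_pos_of_mem_daggerA {x : H} (hx : ‖x‖ < 1) (hxM : ((x, 1) : H × ℂ) ∈ M)
    {w : H × ℂ} (hw : w ∈ daggerA M) (hw0 : w ≠ 0) : 0 < (formA w w).re := by
  have hδ : 0 < 1 - ‖x‖ ^ 2 := by nlinarith [norm_nonneg x]
  exact (mul_pos hδ (pow_pos (norm_pos_iff.2 hw0) 2)).trans_le
    (mul_sq_norm_le_re_formA hx.le (snd_eq_inner_of_mem_daggerA hxM hw))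

lemma completeForA_of_le [CompleteSpace H] (hM : IsClosed (M : Set (H × ℂ))) {c : ℝ}
    (hc : 0 < c) (h : ∀ w ∈ M, c * ‖w‖ ^ 2 ≤ (formA w w).re) : CompleteForA M := by
  have hnA : ∀ w ∈ M, √c * ‖w‖ ≤ nA w := fun w hw => by
    rw [nA, ← Real.sqrt_sq (norm_nonneg w), ← Real.sqrt_mul hc.le]
    exact Real.sqrt_le_sqrt (h w hw)
  intro f hf hcau
  have hcauchy : CauchySeq f := Metric.cauchySeq_iff.2 fun ε hε => by
    obtain ⟨N, hN⟩ := hcau (√c * ε) (by positivity)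
    refine ⟨N, fun m hm n hn => ?_⟩
    rw [dist_eq_norm]
    exact lt_of_mul_lt_mul_left ((hnA _ (M.sub_mem (hf m) (hf n))).trans_lt (hN m n hm hn))
      (Real.sqrt_nonneg c)
  obtain ⟨v, hv⟩ := cauchySeq_tendsto_of_complete hcauchy
  refine ⟨v, hM.mem_of_tendsto hv (Filter.Eventually.of_forall hf), fun ε hε => ?_⟩
  obtain ⟨N, hN⟩ := Metric.tendsto_atTop.1 hv ε hε
  exact ⟨N, fun n hn => (nA_le_norm _).trans_lt (dist_eq_norm (f n) v ▸ hN n hn)⟩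

end Dagger

section Decomposition
variable {H : Type*} [NormedAddCommGroup H] [InnerProductSpace ℂ H]

/-- A parametrization of the `A`-orthogonal complement of `(x, 1)`. -/
noncomputable def innerGraph (x : H) : H →L[ℂ] H × ℂ :=
  (ContinuousLinearMap.id ℂ H).prod (innerSL ℂ x)

@[simp] lemma innerGraph_apply (x y : H) : innerGraph x y = (y, ⟪x, y⟫_ℂ) := rfl

noncomputable def gramOp (x : H) : H →L[ℂ] H :=
  ContinuousLinearMap.id ℂ H - (innerSL ℂ x).smulRight x

lemma gramOp_apply (x y : H) : gramOp x y = y - ⟪x, y⟫_ℂ • x := rfl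

lemma formA_innerGraph (x y z : H) :
    formA (innerGraph x y) (innerGraph x z) = ⟪z, gramOp x y⟫_ℂ := by
  simp [formA, gramOp_apply, inner_conj_symm]

lemma exists_eq_smul_add_innerGraph {x : H} (hx : ‖x‖ ≠ 1) (w : H × ℂ) :
    ∃ (s : ℂ) (y : H), w = s • ((x, 1) : H × ℂ) + innerGraph x y := by
  set e : H × ℂ := (x, 1)
  have he : formA e e ≠ 0 := by
    rw [formA_self, Complex.ofReal_ne_zero, norm_one, one_pow, sub_ne_zero]
    exact fun h => hx ((pow_eq_one_iff_of_nonneg (norm_nonneg x) two_ne_zero).1 h)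
  set s := formA w e / formA e e
  have h : formA (w - s • e) e = 0 := by
    rw [formA_sub_left, formA_smul_left, div_mul_cancel₀ _ he, sub_self]
  rw [formA_mk_one, sub_eq_zero] at h
  refine ⟨s, (w - s • e).1, Prod.ext ?_ ?_⟩
  · simp
  · show w.2 = s * 1 + ⟪x, (w - s • e).1⟫_ℂ
    rw [h]
    simp [e]

theorem exists_sub_mem_daggerA [CompleteSpace H] {x : H} (hx : ‖x‖ < 1)
    {M : Submodule ℂ (H × ℂ)} (hMc : IsClosed (M : Set (H × ℂ)))
    (hxM : ((x, 1) : H × ℂ) ∈ M) (u : H × ℂ) : ∃ m ∈ M, u - m ∈ daggerA M := by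
  -- `F` is `M ∩ (x, 1)†` in the coordinates given by `innerGraph x`.
  set F := M.comap (innerGraph x : H →ₗ[ℂ] H × ℂ)
  have : CompleteSpace F := (hMc.preimage (innerGraph x).continuous).completeSpace_coe
  have hδ : 0 < 1 - ‖x‖ ^ 2 := by nlinarith [norm_nonneg x]
  obtain ⟨t, y, rfl⟩ := exists_eq_smul_add_innerGraph hx.ne u
  obtain ⟨f, hfF, hf⟩ := F.exists_sub_mem_orthogonal_of_coercive (gramOp x) hδ
    (fun z => by rw [← formA_innerGraph]; exact re_formA_self_ge x (w := innerGraph x z) rfl) y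
  refine ⟨t • (x, 1) + innerGraph x f, M.add_mem (M.smul_mem t hxM) hfF, fun m hm => ?_⟩
  obtain ⟨s, z, rfl⟩ := exists_eq_smul_add_innerGraph hx.ne m
  have hzF : innerGraph x z ∈ M := by
    simpa using M.sub_mem hm (M.smul_mem s hxM)
  rw [add_sub_add_left_eq_sub, ← map_sub, formA_add_right, formA_smul_right, formA_innerGraph,
    (Submodule.mem_orthogonal _ _).1 hf z hzF, formA_mk_one]
  simp

theorem isCompl_daggerA [CompleteSpace H] {x : H} (hx : ‖x‖ < 1) {M : Submodule ℂ (H × ℂ)}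
    (hMc : IsClosed (M : Set (H × ℂ))) (hxM : ((x, 1) : H × ℂ) ∈ M) :
    IsCompl M (daggerA M) := by
  refine ⟨Submodule.disjoint_def.2 fun v hvM hvD => ?_,
    Submodule.codisjoint_iff_exists_add_eq.2 fun u => ?_⟩
  · by_contra hv0
    have := re_formA_self_pos_of_mem_daggerA hx hxM hvD hv0
    rw [hvD v hvM, Complex.zero_re] at this
    exact this.false
  · obtain ⟨m, hm, hd⟩ := exists_sub_mem_daggerA hx hMc hxM u
    exact ⟨m, u - m, hm, hd, add_sub_cancel m u⟩

end Decomposition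

section Centralizer
variable {H : Type*} [NormedAddCommGroup H] [InnerProductSpace ℂ H]
  {T : (H × ℂ) →L[ℂ] (H × ℂ)} {lam : ℂ} {M : Submodule ℂ (H × ℂ)}

lemma image_daggerA_eq {S : (H × ℂ) →L[ℂ] (H × ℂ)} (hS : memG S)
    (hSM : S '' (M : Set (H × ℂ)) = M) : S '' (daggerA M : Set (H × ℂ)) = daggerA M := by
  ext w
  constructor
  · rintro ⟨v, hv, rfl⟩ m hm
    obtain ⟨m', hm', rfl⟩ : m ∈ S '' (M : Set (H × ℂ)) := by rwa [hSM]
    rw [hS.2, hv m' hm']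
  · intro hw
    obtain ⟨v, rfl⟩ := hS.1.2 w
    refine ⟨v, fun m hm => ?_, rfl⟩
    rw [← hS.2]
    exact hw _ (Set.mapsTo_iff_image_subset.2 hSM.subset hm)

lemma bijOn_daggerA (hT : memG T)
    (hM : M = LinearMap.ker ((T : (H × ℂ) →ₗ[ℂ] (H × ℂ)) - lam • LinearMap.id)) :
    Set.BijOn T (daggerA M : Set (H × ℂ)) (daggerA M) := by
  have hTM : T '' (M : Set (H × ℂ)) = M := hM ▸ image_ker_sub_smul_id_eq hT.1 (fun _ => rfl) lam
  have h := hT.1.1.injOn.bijOn_image (s := (daggerA M : Set (H × ℂ)))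
  rwa [image_daggerA_eq hT hTM] at h

theorem comp_eq_comp_iff
    (hM : M = LinearMap.ker ((T : (H × ℂ) →ₗ[ℂ] (H × ℂ)) - lam • LinearMap.id))
    (hc : IsCompl M (daggerA M)) {S : (H × ℂ) →L[ℂ] (H × ℂ)} (hS : memG S) :
    S ∘L T = T ∘L S ↔
      (S '' (M : Set (H × ℂ)) = (M : Set (H × ℂ)) ∧
       S '' (daggerA M : Set (H × ℂ)) = (daggerA M : Set (H × ℂ)) ∧
       ∀ v ∈ daggerA M, S (T v) = T (S v)) := by
  constructor
  · intro hST
    have hSM : S '' (M : Set (H × ℂ)) = M :=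
      hM ▸ image_ker_sub_smul_id_eq hS.1 (fun v => DFunLike.congr_fun hST v) lam
    exact ⟨hSM, image_daggerA_eq hS hSM, fun v _ => DFunLike.congr_fun hST v⟩
  · rintro ⟨hSM, -, hSD⟩
    exact ContinuousLinearMap.comp_eq_comp_of_mapsTo hM hc.codisjoint
      (Set.mapsTo_iff_image_subset.2 hSM.subset) hSD

lemma memG_ofIsTopCompl (h : Submodule.IsTopCompl M (daggerA M)) {S₁ : M →L[ℂ] M}
    {S₂ : daggerA M →L[ℂ] daggerA M} (hS₁ : Function.Bijective S₁)
    (hA₁ : ∀ u v : M, formA (S₁ u : H × ℂ) (S₁ v : H × ℂ) = formA (u : H × ℂ) (v : H × ℂ))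
    (hS₂ : Function.Bijective S₂)
    (hA₂ : ∀ u v : daggerA M,
      formA (S₂ u : H × ℂ) (S₂ v : H × ℂ) = formA (u : H × ℂ) (v : H × ℂ)) :
    memG (ContinuousLinearMap.ofIsTopCompl h (M.subtypeL ∘L S₁) ((daggerA M).subtypeL ∘L S₂)) := by
  refine ⟨Submodule.bijective_ofIsCompl h.isCompl hS₁ hS₂, fun u v => ?_⟩
  obtain ⟨m, w, rfl, -⟩ := Submodule.existsUnique_add_of_isCompl h.isCompl u
  obtain ⟨m', w', rfl, -⟩ := Submodule.existsUnique_add_of_isCompl h.isCompl v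
  simp only [map_add, ContinuousLinearMap.ofIsTopCompl_apply_left,
    ContinuousLinearMap.ofIsTopCompl_apply_right, ContinuousLinearMap.comp_apply,
    Submodule.subtypeL_apply]
  rw [formA_add_add_of_mem_daggerA (S₁ m).2 (S₁ m').2 (S₂ w).2 (S₂ w').2,
    formA_add_add_of_mem_daggerA m.2 m'.2 w.2 w'.2, hA₁, hA₂]

theorem existsUnique_comp_eq_comp_extension [CompleteSpace H] (hT : memG T)
    (hM : M = LinearMap.ker ((T : (H × ℂ) →ₗ[ℂ] (H × ℂ)) - lam • LinearMap.id))
    (hc : IsCompl M (daggerA M)) (hMc : IsClosed (M : Set (H × ℂ)))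
    (S₁ : M →L[ℂ] M) (S₂ : daggerA M →L[ℂ] daggerA M) (hS₁ : Function.Bijective S₁)
    (hA₁ : ∀ u v : M, formA (S₁ u : H × ℂ) (S₁ v : H × ℂ) = formA (u : H × ℂ) (v : H × ℂ))
    (hS₂ : Function.Bijective S₂)
    (hA₂ : ∀ u v : daggerA M,
      formA (S₂ u : H × ℂ) (S₂ v : H × ℂ) = formA (u : H × ℂ) (v : H × ℂ))
    (hST₂ : ∀ u w : daggerA M, T (u : H × ℂ) = w → T (S₂ u : H × ℂ) = S₂ w) :
    ∃! S : (H × ℂ) →L[ℂ] (H × ℂ), memG S ∧ S ∘L T = T ∘L S ∧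
      (∀ u : M, S u = S₁ u) ∧ ∀ u : daggerA M, S u = S₂ u := by
  have h := Submodule.IsCompl.isTopCompl_of_isClosed hc hMc (isClosed_daggerA M)
  set S := ContinuousLinearMap.ofIsTopCompl h (M.subtypeL ∘L S₁) ((daggerA M).subtypeL ∘L S₂)
  have hS₁' : ∀ u : M, S u = S₁ u := ContinuousLinearMap.ofIsTopCompl_apply_left h _ _
  have hS₂' : ∀ u : daggerA M, S u = S₂ u := ContinuousLinearMap.ofIsTopCompl_apply_right h _ _
  refine ⟨S, ⟨memG_ofIsTopCompl h hS₁ hA₁ hS₂ hA₂, ?_, hS₁', hS₂'⟩, ?_⟩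
  · refine ContinuousLinearMap.comp_eq_comp_of_mapsTo hM hc.codisjoint
      (fun m hm => hS₁' ⟨m, hm⟩ ▸ (S₁ ⟨m, hm⟩).2) (fun w hw => ?_)
    have hTw := (bijOn_daggerA hT hM).mapsTo hw
    exact (hS₂' ⟨T w, hTw⟩).trans ((hST₂ ⟨w, hw⟩ ⟨T w, hTw⟩ rfl).symm.trans
      (congrArg T (hS₂' ⟨w, hw⟩).symm))
  · rintro S' ⟨-, -, hS'₁, hS'₂⟩
    exact (ContinuousLinearMap.ofIsTopCompl_eq h (fun u => (hS'₁ u).symm)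
      (fun u => (hS'₂ u).symm)).symm

end Centralizer

section
variable {H : Type*} [NormedAddCommGroup H] [InnerProductSpace ℂ H] [CompleteSpace H]

theorem centralizer_elliptic_general (T : (H × ℂ) →L[ℂ] (H × ℂ))
    (hT : memG T) (lam : ℂ)
    (M : Submodule ℂ (H × ℂ))
    (hM : M = LinearMap.ker ((T : (H × ℂ) →ₗ[ℂ] (H × ℂ)) - lam • LinearMap.id))
    (htime : ∃ v ∈ M, ∃ c : ℝ, c < 0 ∧ formA v v = (c : ℂ)) :
    -- internal direct sum H ⊕ ℂ = M ⊕ M†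
    IsCompl M (daggerA M) ∧
    -- A is positive definite on M† and M† is complete for the induced norm
    (∀ v ∈ daggerA M, v ≠ 0 → 0 < (formA v v).re ∧ (formA v v).im = 0) ∧
    CompleteForA (daggerA M) ∧
    -- T maps M† bijectively onto itself
    Set.BijOn T (daggerA M : Set (H × ℂ)) (daggerA M : Set (H × ℂ)) ∧
    -- S ∈ G commutes with T iff it preserves M and M† and commutes with T on M†
    (∀ S : (H × ℂ) →L[ℂ] (H × ℂ), memG S →
      (S ∘L T = T ∘L S ↔
        (S '' (M : Set (H × ℂ)) = (M : Set (H × ℂ)) ∧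
         S '' (daggerA M : Set (H × ℂ)) = (daggerA M : Set (H × ℂ)) ∧
         ∀ v ∈ daggerA M, S (T v) = T (S v)))) ∧
    -- the centralizer of T is G_M × Z(T|_{M†}): every pair consisting of an
    -- A-preserving bijection of M and a unitary of (M†, A) commuting with T|_{M†}
    -- comes from a unique element of the centralizer of T in G
    (∀ (S₁ : M →L[ℂ] M) (S₂ : daggerA M →L[ℂ] daggerA M),
      Function.Bijective S₁ →
      (∀ u v : M, formA (S₁ u : H × ℂ) (S₁ v : H × ℂ) = formA (u : H × ℂ) (v : H × ℂ)) →
      Function.Bijective S₂ →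
      (∀ u v : daggerA M,
        formA (S₂ u : H × ℂ) (S₂ v : H × ℂ) = formA (u : H × ℂ) (v : H × ℂ)) →
      (∀ u w : daggerA M, T (u : H × ℂ) = (w : H × ℂ) →
        T (S₂ u : H × ℂ) = (S₂ w : H × ℂ)) →
      ∃! S : (H × ℂ) →L[ℂ] (H × ℂ), memG S ∧ S ∘L T = T ∘L S ∧
        (∀ u : M, S (u : H × ℂ) = (S₁ u : H × ℂ)) ∧
        (∀ u : daggerA M, S (u : H × ℂ) = (S₂ u : H × ℂ))) := by
  obtain ⟨v, hvM, c, hc, hv⟩ := htime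
  obtain ⟨a, x, hx, hax⟩ := exists_smul_eq_mk_one_of_re_formA_neg (v := v)
    (by rwa [hv, Complex.ofReal_re])
  have hxM : ((x, 1) : H × ℂ) ∈ M := hax ▸ M.smul_mem a hvM
  have hMc : IsClosed (M : Set (H × ℂ)) :=
    hM ▸ (T - lam • ContinuousLinearMap.id ℂ (H × ℂ)).isClosed_ker
  have hcompl := isCompl_daggerA hx hMc hxM
  have hδ : 0 < 1 - ‖x‖ ^ 2 := by nlinarith [norm_nonneg x]
  exact ⟨hcompl,
    fun w hw hw0 => ⟨re_formA_self_pos_of_mem_daggerA hx hxM hw hw0,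
      by rw [formA_self, Complex.ofReal_im]⟩,
    completeForA_of_le (isClosed_daggerA M) hδ
      fun w hw => mul_sq_norm_le_re_formA hx.le (snd_eq_inner_of_mem_daggerA hxM hw),
    bijOn_daggerA hT hM,
    fun S hS => comp_eq_comp_iff hM hcompl hS,
    existsUnique_comp_eq_comp_extension hT hM hcompl hMc⟩

/-- centralizer of an elliptic isometry `T` whose eigenspace
`M = ker(T - λI)` is time-like: `H ⊕ ℂ = M ⊕ M†`, and `S ∈ G` commutes with `T`
iff it preserves `M` and `M†` and commutes with `T` on `M†`; the centralizer is
identified with `G_M × Z(T|_{M†})`. -/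
theorem centralizer_elliptic (T : (H × ℂ) →L[ℂ] (H × ℂ))
    (hT : memG T) (hell : IsEllipticG T) (lam : ℂ)
    (M : Submodule ℂ (H × ℂ))
    (hM : M = LinearMap.ker ((T : (H × ℂ) →ₗ[ℂ] (H × ℂ)) - lam • LinearMap.id))
    (htime : ∃ v ∈ M, ∃ c : ℝ, c < 0 ∧ formA v v = (c : ℂ)) :
    -- internal direct sum H ⊕ ℂ = M ⊕ M†
    IsCompl M (daggerA M) ∧
    -- A is positive definite on M† and M† is complete for the induced norm
    (∀ v ∈ daggerA M, v ≠ 0 → 0 < (formA v v).re ∧ (formA v v).im = 0) ∧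
    CompleteForA (daggerA M) ∧
    -- T maps M† bijectively onto itself
    Set.BijOn T (daggerA M : Set (H × ℂ)) (daggerA M : Set (H × ℂ)) ∧
    -- S ∈ G commutes with T iff it preserves M and M† and commutes with T on M†
    (∀ S : (H × ℂ) →L[ℂ] (H × ℂ), memG S →
      (S ∘L T = T ∘L S ↔
        (S '' (M : Set (H × ℂ)) = (M : Set (H × ℂ)) ∧
         S '' (daggerA M : Set (H × ℂ)) = (daggerA M : Set (H × ℂ)) ∧
         ∀ v ∈ daggerA M, S (T v) = T (S v)))) ∧
    -- the centralizer of T is G_M × Z(T|_{M†}): every pair consisting of an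
    -- A-preserving bijection of M and a unitary of (M†, A) commuting with T|_{M†}
    -- comes from a unique element of the centralizer of T in G
    (∀ (S₁ : M →L[ℂ] M) (S₂ : daggerA M →L[ℂ] daggerA M),
      Function.Bijective S₁ →
      (∀ u v : M, formA (S₁ u : H × ℂ) (S₁ v : H × ℂ) = formA (u : H × ℂ) (v : H × ℂ)) →
      Function.Bijective S₂ →
      (∀ u v : daggerA M,
        formA (S₂ u : H × ℂ) (S₂ v : H × ℂ) = formA (u : H × ℂ) (v : H × ℂ)) →
      (∀ u w : daggerA M, T (u : H × ℂ) = (w : H × ℂ) →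
        T (S₂ u : H × ℂ) = (S₂ w : H × ℂ)) →
      ∃! S : (H × ℂ) →L[ℂ] (H × ℂ), memG S ∧ S ∘L T = T ∘L S ∧
        (∀ u : M, S (u : H × ℂ) = (S₁ u : H × ℂ)) ∧
        (∀ u : daggerA M, S (u : H × ℂ) = (S₂ u : H × ℂ))) :=
  centralizer_elliptic_general T hT lam M hM htime

end
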